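/- arXiv:math/0005045 — 2 statements merged into one kernel-verified Lean document; each statement's English description precedes it below -/
import Mathlib

section
/- An n-tuple (P_1,…,P_n) of elements of K⟨n⟩ is a cyclic gradient, i.e. there exists P ∈ K⟨n⟩ with δ_j P = P_j for all 1 ≤ j ≤ n, if and only if Σ_{j=1}^n [X_j, P_j] = 0. -/
/-! Setup: the free associative algebra `K⟨X_1,…,X_n⟩` realized as the monoid
algebra of the free monoid on `Fin n`, together with the partial cyclic
derivatives `δ_j`, the number operator `N` and the cyclic symmetrization `C`. -/

noncomputable section

/-- `K⟨n⟩`, the ring of polynomials in `n` noncommuting indeterminates. -/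
abbrev FreePoly (K : Type) [CommSemiring K] (n : ℕ) : Type :=
  MonoidAlgebra K (FreeMonoid (Fin n))

/-- The monomial `X_{i_1} ⋯ X_{i_p}` associated to the word `w = [i_1,…,i_p]`. -/
def mono (K : Type) [Field K] {n : ℕ} (w : List (Fin n)) : FreePoly K n :=
  MonoidAlgebra.single (FreeMonoid.ofList w) 1

/-- The indeterminate `X k`. -/
def Xvar (K : Type) [Field K] {n : ℕ} (k : Fin n) : FreePoly K n := mono K [k]

variable {K : Type} [Field K] [CharZero K] {n : ℕ}

/-- The partial cyclic derivative `δ_j = μ̃ ∘ ∂_j`: on a monomial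
`X_{i_0} ⋯ X_{i_s}` it gives `∑_{p : i_p = j} X_{i_{p+1}} ⋯ X_{i_s} X_{i_0} ⋯ X_{i_{p-1}}`. -/
def cycDeriv (j : Fin n) : FreePoly K n →ₗ[K] FreePoly K n :=
  (Finsupp.lsum K fun w => LinearMap.toSpanSingleton K _
    (∑ p : Fin (FreeMonoid.toList w).length,
      if (FreeMonoid.toList w).get p = j then
        mono K ((FreeMonoid.toList w).drop (p + 1) ++ (FreeMonoid.toList w).take p)
      else 0)) ∘ₗ (MonoidAlgebra.coeffLinearEquiv K).toLinearMap

/-- The number operator `N`, multiplying a monomial by its degree. -/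
def numOp : FreePoly K n →ₗ[K] FreePoly K n :=
  (Finsupp.lsum K fun w => LinearMap.toSpanSingleton K _
    ((FreeMonoid.toList w).length • mono K (FreeMonoid.toList w))) ∘ₗ
      (MonoidAlgebra.coeffLinearEquiv K).toLinearMap

/-- The cyclic symmetrization `C`, sending a monomial of degree `p ≥ 1` to the
sum of its `p` cyclic rotations (and `1` to `0`). -/
def cycSym : FreePoly K n →ₗ[K] FreePoly K n :=
  (Finsupp.lsum K fun w => LinearMap.toSpanSingleton K _
    (∑ p ∈ Finset.range (FreeMonoid.toList w).length,
      mono K ((FreeMonoid.toList w).rotate (p + 1)))) ∘ₗ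
      (MonoidAlgebra.coeffLinearEquiv K).toLinearMap

end

/-! Summing `Xⱼ δⱼ Q` over `j` cycles each monomial of `Q` through all of its rotations, and so
does summing `(δⱼ Q) Xⱼ`: both sums equal the cyclic symmetrization `C Q`, so a cyclic gradient
satisfies `∑ⱼ [Xⱼ, Pⱼ] = 0`. Conversely, if `R := ∑ⱼ Xⱼ Pⱼ = ∑ⱼ Pⱼ Xⱼ`, then the coefficients of
`R` at `X_a w` and at `w X_a` are both the coefficient of `P_a` at `w`, so the coefficients of
`R` are invariant under rotation of words. For `Q := N⁻¹ R` this gives `C Q = R` on nonconstant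
words, and reading off the coefficient of `w X_k` in `∑ⱼ (δⱼ Q) Xⱼ = C Q = ∑ⱼ Pⱼ Xⱼ` shows
`δ_k Q = P_k`. -/

open Finset

namespace List

variable {α : Type*}

theorem rotate_sub_eq_iff {w u : List α} (h : w.length = u.length) {q : ℕ} (hq : q ≤ u.length) :
    w.rotate (u.length - q) = u ↔ w = u.rotate q := by
  constructor
  · intro hw
    rw [← hw, rotate_rotate, Nat.sub_add_cancel hq, ← h, rotate_length]
  · rintro rfl
    rw [rotate_rotate, Nat.add_sub_cancel' hq, rotate_length]

theorem sum_range_ite_rotate_succ_eq [DecidableEq α] {M : Type*} [AddCommMonoid M]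
    (w u : List α) (c : M) :
    ∑ p ∈ Finset.range w.length, (if w.rotate (p + 1) = u then c else 0) =
      ∑ q ∈ Finset.range u.length, (if w = u.rotate q then c else 0) := by
  by_cases h : w.length = u.length
  · rw [h, ← sum_range_reflect]
    refine sum_congr rfl fun q hq => ?_
    have hq : q < u.length := Finset.mem_range.mp hq
    rw [show u.length - 1 - q + 1 = u.length - q by omega]
    exact if_congr (rotate_sub_eq_iff h hq.le) rfl rfl
  · have hw : ∀ p, w.rotate (p + 1) ≠ u := fun p hp => h (by rw [← hp, length_rotate])
    have hu : ∀ q, w ≠ u.rotate q := fun q hq => h (by rw [hq, length_rotate])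
    simp only [hw, hu, if_false, sum_const_zero]

theorem sum_range_rotate_succ {M : Type*} [AddCancelCommMonoid M] (l : List α) (f : List α → M) :
    ∑ p ∈ Finset.range l.length, f (l.rotate (p + 1)) =
      ∑ p ∈ Finset.range l.length, f (l.rotate p) := by
  rw [← add_left_inj (f (l.rotate 0)), ← Finset.sum_range_succ' (fun p => f (l.rotate p)),
    Finset.sum_range_succ, rotate_length, rotate_zero]

theorem apply_rotate_of_apply_rotate_one {β : Sort*} {f : List α → β}
    (h : ∀ l, f (l.rotate 1) = f l) (l : List α) (k : ℕ) : f (l.rotate k) = f l := by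
  induction k with
  | zero => rw [rotate_zero]
  | succ k ih => rw [← rotate_rotate, h, ih]

theorem rotate_eq_getElem_cons {l : List α} {p : ℕ} (hp : p < l.length) :
    l.rotate p = l[p] :: (l.drop (p + 1) ++ l.take p) := by
  rw [rotate_eq_drop_append_take hp.le, drop_eq_getElem_cons hp, cons_append]

theorem rotate_add_one_eq_append_getElem {l : List α} {p : ℕ} (hp : p < l.length) :
    l.rotate (p + 1) = l.drop (p + 1) ++ l.take p ++ [l[p]] := by
  rw [rotate_eq_drop_append_take hp, take_succ_eq_append_getElem hp, append_assoc]

end List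

section

variable {K : Type} [Field K] {n : ℕ}

theorem mono_mul_mono (v w : List (Fin n)) : mono K v * mono K w = mono K (v ++ w) := by
  simp [mono, FreeMonoid.ofList_append]

theorem coeff_mono (v u : List (Fin n)) :
    (mono K v).coeff (FreeMonoid.ofList u) = if v = u then 1 else 0 := by
  classical
  rw [mono, MonoidAlgebra.coeff_single, Finsupp.single_apply]
  exact if_congr FreeMonoid.ofList.apply_eq_iff_eq rfl rfl

theorem linearMap_ext_mono {M : Type*} [AddCommMonoid M] [Module K M]
    {f g : FreePoly K n →ₗ[K] M} (h : ∀ l, f (mono K l) = g (mono K l)) : f = g :=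
  MonoidAlgebra.lhom_ext' fun w => LinearMap.ext_ring (h w.toList)

theorem coeff_Xvar_mul (S : FreePoly K n) (j k : Fin n) (m : List (Fin n)) :
    (Xvar K j * S).coeff (FreeMonoid.ofList (k :: m)) =
      if j = k then S.coeff (FreeMonoid.ofList m) else 0 := by
  split_ifs with hjk
  · subst hjk
    exact (MonoidAlgebra.coeff_single_mul_mul S 1 _ _).trans (one_mul _)
  · refine MonoidAlgebra.coeff_single_mul_of_forall_mul_ne _ _ fun d hd => hjk ?_
    exact (List.cons.inj (congrArg FreeMonoid.toList hd)).1

theorem coeff_mul_Xvar (S : FreePoly K n) (j k : Fin n) (m : List (Fin n)) :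
    (S * Xvar K j).coeff (FreeMonoid.ofList (m ++ [k])) =
      if j = k then S.coeff (FreeMonoid.ofList m) else 0 := by
  split_ifs with hjk
  · subst hjk
    exact (MonoidAlgebra.coeff_mul_single_mul S 1 _ _).trans (mul_one _)
  · refine MonoidAlgebra.coeff_mul_single_of_forall_mul_ne _ _ fun d hd => hjk ?_
    exact List.singleton_injective (List.append_inj' (congrArg FreeMonoid.toList hd) rfl).2

theorem coeff_sum_Xvar_mul (S : Fin n → FreePoly K n) (k : Fin n) (m : List (Fin n)) :
    (∑ j, Xvar K j * S j).coeff (FreeMonoid.ofList (k :: m)) =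
      (S k).coeff (FreeMonoid.ofList m) := by
  simp only [MonoidAlgebra.coeff_sum, sum_apply', coeff_Xvar_mul, sum_ite_eq', mem_univ, if_true]

theorem coeff_sum_mul_Xvar (S : Fin n → FreePoly K n) (k : Fin n) (m : List (Fin n)) :
    (∑ j, S j * Xvar K j).coeff (FreeMonoid.ofList (m ++ [k])) =
      (S k).coeff (FreeMonoid.ofList m) := by
  simp only [MonoidAlgebra.coeff_sum, sum_apply', coeff_mul_Xvar, sum_ite_eq', mem_univ, if_true]

theorem cycDeriv_mono (j : Fin n) (l : List (Fin n)) :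
    cycDeriv j (mono K l) = ∑ p : Fin l.length,
      if l[p] = j then mono K (l.drop (p + 1) ++ l.take p) else 0 :=
  (Finsupp.lsum_single K _ _ _).trans (one_smul K _)

theorem cycSym_mono (l : List (Fin n)) :
    cycSym (mono K l) = ∑ p ∈ range l.length, mono K (l.rotate (p + 1)) :=
  (Finsupp.lsum_single K _ _ _).trans (one_smul K _)

theorem sum_Xvar_mul_cycDeriv_mono (l : List (Fin n)) :
    ∑ j, Xvar K j * cycDeriv j (mono K l) = ∑ p ∈ range l.length, mono K (l.rotate p) := by
  calc ∑ j, Xvar K j * cycDeriv j (mono K l)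
      = ∑ j, ∑ p : Fin l.length, if l[p] = j then mono K (l.rotate p) else 0 := by
        refine sum_congr rfl fun j _ => ?_
        rw [cycDeriv_mono, mul_sum]
        refine sum_congr rfl fun p _ => ?_
        rw [mul_ite, mul_zero]
        split_ifs with h
        · rw [← h, Fin.getElem_fin, Xvar, mono_mul_mono, List.rotate_eq_getElem_cons p.2,
            List.singleton_append]
        · rfl
    _ = ∑ p : Fin l.length, mono K (l.rotate p) := by
        rw [sum_comm]
        simp only [sum_ite_eq, mem_univ, if_true]
    _ = ∑ p ∈ range l.length, mono K (l.rotate p) :=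
        Fin.sum_univ_eq_sum_range (fun p => mono K (l.rotate p)) _

theorem sum_cycDeriv_mul_Xvar_mono (l : List (Fin n)) :
    ∑ j, cycDeriv j (mono K l) * Xvar K j = ∑ p ∈ range l.length, mono K (l.rotate (p + 1)) := by
  calc ∑ j, cycDeriv j (mono K l) * Xvar K j
      = ∑ j, ∑ p : Fin l.length, if l[p] = j then mono K (l.rotate (p + 1)) else 0 := by
        refine sum_congr rfl fun j _ => ?_
        rw [cycDeriv_mono, sum_mul]
        refine sum_congr rfl fun p _ => ?_
        rw [ite_mul, zero_mul]
        split_ifs with h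
        · rw [← h, Fin.getElem_fin, Xvar, mono_mul_mono,
            List.rotate_add_one_eq_append_getElem p.2]
        · rfl
    _ = ∑ p : Fin l.length, mono K (l.rotate (p + 1)) := by
        rw [sum_comm]
        simp only [sum_ite_eq, mem_univ, if_true]
    _ = ∑ p ∈ range l.length, mono K (l.rotate (p + 1)) :=
        Fin.sum_univ_eq_sum_range (fun p => mono K (l.rotate (p + 1))) _

theorem sum_Xvar_mul_cycDeriv (Q : FreePoly K n) : ∑ j, Xvar K j * cycDeriv j Q = cycSym Q := by
  have h : ∑ j : Fin n, LinearMap.mulLeft K (Xvar K j) ∘ₗ cycDeriv j = cycSym :=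
    linearMap_ext_mono fun l => by
      simpa [sum_Xvar_mul_cycDeriv_mono, cycSym_mono] using
        (l.sum_range_rotate_succ (mono K)).symm
  simpa using congr($h Q)

theorem sum_cycDeriv_mul_Xvar (Q : FreePoly K n) : ∑ j, cycDeriv j Q * Xvar K j = cycSym Q := by
  have h : ∑ j : Fin n, LinearMap.mulRight K (Xvar K j) ∘ₗ cycDeriv j = cycSym :=
    linearMap_ext_mono fun l => by
      simpa using (sum_cycDeriv_mul_Xvar_mono l).trans (cycSym_mono l).symm
  simpa using congr($h Q)

theorem coeff_cycSym (Q : FreePoly K n) (u : List (Fin n)) :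
    (cycSym Q).coeff (FreeMonoid.ofList u) =
      ∑ q ∈ range u.length, Q.coeff (FreeMonoid.ofList (u.rotate q)) := by
  have h : Finsupp.lapply (FreeMonoid.ofList u) ∘ₗ (MonoidAlgebra.coeffLinearEquiv K).toLinearMap ∘ₗ
      cycSym =
      ∑ q ∈ range u.length, Finsupp.lapply (FreeMonoid.ofList (u.rotate q)) ∘ₗ
        (MonoidAlgebra.coeffLinearEquiv K).toLinearMap :=
    linearMap_ext_mono fun l => by
      simpa [cycSym_mono, MonoidAlgebra.coeff_sum, coeff_mono] using
        l.sum_range_ite_rotate_succ_eq u (1 : K)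
  simpa using congr($h Q)

-- `N⁻¹` away from the constant term, which `(0 : K)⁻¹ = 0` sends to `0`.
noncomputable def divByDegree (R : FreePoly K n) : FreePoly K n :=
  .ofCoeff ((fun w : FreeMonoid (Fin n) => (w.length : K)⁻¹) • R.coeff)

theorem coeff_divByDegree (R : FreePoly K n) (u : List (Fin n)) :
    (divByDegree R).coeff (FreeMonoid.ofList u) =
      (u.length : K)⁻¹ * R.coeff (FreeMonoid.ofList u) :=
  rfl

end

variable {K : Type} [Field K] [CharZero K] {n : ℕ}

theorem coeff_cycSym_divByDegree {R : FreePoly K n}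
    (hR : ∀ u : List (Fin n),
      R.coeff (FreeMonoid.ofList (u.rotate 1)) = R.coeff (FreeMonoid.ofList u))
    {u : List (Fin n)} (hu : u ≠ []) :
    (cycSym (divByDegree R)).coeff (FreeMonoid.ofList u) = R.coeff (FreeMonoid.ofList u) := by
  have hL : (u.length : K) ≠ 0 := by simpa using hu
  calc (cycSym (divByDegree R)).coeff (FreeMonoid.ofList u)
      = ∑ q ∈ range u.length, (u.length : K)⁻¹ * R.coeff (FreeMonoid.ofList u) := by
        rw [coeff_cycSym]
        refine sum_congr rfl fun q _ => ?_
        rw [coeff_divByDegree, List.length_rotate,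
          List.apply_rotate_of_apply_rotate_one (f := fun u => R.coeff (FreeMonoid.ofList u)) hR]
    _ = R.coeff (FreeMonoid.ofList u) := by
        rw [sum_const, card_range, nsmul_eq_mul, ← mul_assoc, mul_inv_cancel₀ hL, one_mul]

theorem isCyclicGradient_iff_sum_commutator_eq_zero (P : Fin n → FreePoly K n) :
    (∃ Q : FreePoly K n, ∀ j : Fin n, cycDeriv j Q = P j) ↔
      ∑ j : Fin n, (Xvar K j * P j - P j * Xvar K j) = 0 := by
  rw [sum_sub_distrib, sub_eq_zero]
  constructor
  · rintro ⟨Q, hQ⟩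
    simp only [← hQ, sum_Xvar_mul_cycDeriv, sum_cycDeriv_mul_Xvar]
  · intro h
    set R := ∑ j, P j * Xvar K j
    have hR : ∀ u : List (Fin n),
        R.coeff (FreeMonoid.ofList (u.rotate 1)) = R.coeff (FreeMonoid.ofList u) := by
      rintro (_ | ⟨a, m⟩)
      · rfl
      · rw [List.rotate_cons_succ, List.rotate_zero, coeff_sum_mul_Xvar, ← h, coeff_sum_Xvar_mul]
    refine ⟨divByDegree R, fun k => MonoidAlgebra.ext <| Finsupp.ext fun w => ?_⟩
    calc (cycDeriv k (divByDegree R)).coeff w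
        = (∑ j, cycDeriv j (divByDegree R) * Xvar K j).coeff
            (FreeMonoid.ofList (w.toList ++ [k])) :=
          (coeff_sum_mul_Xvar (fun j => cycDeriv j (divByDegree R)) k w.toList).symm
      _ = R.coeff (FreeMonoid.ofList (w.toList ++ [k])) := by
          rw [sum_cycDeriv_mul_Xvar, coeff_cycSym_divByDegree hR (by simp)]
      _ = (P k).coeff w := coeff_sum_mul_Xvar P k w.toList
end

section
/- If p ∈ K⟨n⟩ is homogeneous of degree m ≥ 1 and C p = 0, then p is a linear combination of differences of the form X_{i_1}⋯X_{i_m} − X_{i_2}⋯X_{i_m}X_{i_1} (differences of a monomial and a cyclic permutation of it). -/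
/-! Setup: the free associative algebra `K⟨X_1,…,X_n⟩` realized as the monoid
algebra of the free monoid on `Fin n`, together with the partial cyclic
derivatives `δ_j`, the number operator `N` and the cyclic symmetrization `C`. -/

noncomputable section

variable {K : Type} [Field K] [CharZero K] {n : ℕ}

/-! The map `m • id - C` sends a monomial `w` of length `m` to `∑ₖ (w - rotate w (k+1))`, a sum
of differences of rotations, each of which telescopes into single-step differences
`v - rotate v 1`. So `m • p - C p` lies in the span of the cyclic differences for every
homogeneous `p` of degree `m`; if `C p = 0`, dividing by `m ≠ 0` puts `p` itself there. -/

def homogeneousSpan (K : Type) [Field K] (n m : ℕ) : Submodule K (FreePoly K n) :=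
  Submodule.span K {x | ∃ w : List (Fin n), w.length = m ∧ x = mono K w}

def cyclicDiffSpan (K : Type) [Field K] (n m : ℕ) : Submodule K (FreePoly K n) :=
  Submodule.span K {x | ∃ w : List (Fin n), w.length = m ∧ x = mono K w - mono K (w.rotate 1)}

theorem mono_sub_mono_rotate_mem_cyclicDiffSpan {K : Type} [Field K] {n m : ℕ}
    {w : List (Fin n)} (hw : w.length = m) (k : ℕ) :
    mono K w - mono K (w.rotate k) ∈ cyclicDiffSpan K n m := by
  induction k with
  | zero => simp
  | succ k ih =>
    have step : mono K (w.rotate k) - mono K ((w.rotate k).rotate 1) ∈ cyclicDiffSpan K n m :=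
      Submodule.subset_span ⟨w.rotate k, by rw [List.length_rotate, hw], rfl⟩
    rw [List.rotate_rotate] at step
    simpa using add_mem ih step

theorem cycSym_mono_s15 {K : Type} [Field K] {n : ℕ} (w : List (Fin n)) :
    cycSym (mono K w) = ∑ k ∈ Finset.range w.length, mono K (w.rotate (k + 1)) := by
  simp [cycSym, mono]

theorem smul_sub_cycSym_mono_mem_cyclicDiffSpan {K : Type} [Field K] {n : ℕ} (w : List (Fin n)) :
    (w.length : K) • mono K w - cycSym (mono K w) ∈ cyclicDiffSpan K n w.length := by
  have telescoped : (w.length : K) • mono K w - cycSym (mono K w) =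
      ∑ k ∈ Finset.range w.length, (mono K w - mono K (w.rotate (k + 1))) := by
    rw [cycSym_mono_s15, Finset.sum_sub_distrib, Finset.sum_const, Finset.card_range,
      Nat.cast_smul_eq_nsmul]
  rw [telescoped]
  exact Submodule.sum_mem _ fun k _ => mono_sub_mono_rotate_mem_cyclicDiffSpan rfl (k + 1)

theorem smul_sub_cycSym_mem_cyclicDiffSpan {K : Type} [Field K] {n m : ℕ} {q : FreePoly K n}
    (hq : q ∈ homogeneousSpan K n m) :
    (m : K) • q - cycSym q ∈ cyclicDiffSpan K n m := by
  induction hq using Submodule.span_induction with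
  | mem x hx =>
    obtain ⟨w, rfl, rfl⟩ := hx
    exact smul_sub_cycSym_mono_mem_cyclicDiffSpan w
  | zero => simp
  | add x y _ _ hx hy => simpa [smul_add, add_sub_add_comm] using add_mem hx hy
  | smul a x _ hx => simpa [smul_comm _ a, smul_sub] using Submodule.smul_mem _ a hx

theorem homogeneous_cycSym_eq_zero_mem_span_cyclic_differences
    (m : ℕ) (hm : 1 ≤ m) (p : FreePoly K n)
    (hhom : p ∈ Submodule.span K
      {x : FreePoly K n | ∃ w : List (Fin n), w.length = m ∧ x = mono K w})
    (h : cycSym p = 0) :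
    p ∈ Submodule.span K
      {x : FreePoly K n | ∃ w : List (Fin n), w.length = m ∧
        x = mono K w - mono K (w.rotate 1)} := by
  show p ∈ cyclicDiffSpan K n m
  have hmp : (m : K) • p ∈ cyclicDiffSpan K n m := by
    simpa [h] using smul_sub_cycSym_mem_cyclicDiffSpan hhom
  have hm0 : (m : K) ≠ 0 := Nat.cast_ne_zero.mpr (by omega)
  simpa [smul_smul, hm0] using Submodule.smul_mem _ (m : K)⁻¹ hmp

end
end
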